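/- arXiv:2605.21965 — 4 statements merged into one kernel-verified Lean document; each statement's English description precedes it below -/
import Mathlib

section
/- Let p ≠ 1 be a real number, k ≥ 1 a natural number, and a, b, c real numbers. With the weights w_j = p^(j−1)·(1 − p) for 1 ≤ j < k and w_k = p^(k−1), and per-round costs C_j = j·a + (j − 1)·b + c, the expected round cost satisfies ∑_{j=1}^{k} w_j·C_j = μ_k·a + (μ_k − 1)·b + c, where μ_k = (1 − p^k)/(1 − p). -/
/-- **Expected round cost.**
With weights `w_j = p^(j−1)(1−p)` for `1 ≤ j < k`, `w_k = p^(k−1)`, and per-round costs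
`C_j = j·a + (j−1)·b + c`, the expected cost of one speculative round is
`μ_k·a + (μ_k − 1)·b + c` where `μ_k = (1 − p^k)/(1 − p)`. -/
theorem expected_round_cost (p : ℝ) (hp : p ≠ 1) (k : ℕ) (hk : 1 ≤ k) (a b c : ℝ) :
    (∑ j ∈ Finset.Ico 1 k,
        (p ^ (j - 1) * (1 - p)) * ((j : ℝ) * a + ((j : ℝ) - 1) * b + c))
        + p ^ (k - 1) * ((k : ℝ) * a + ((k : ℝ) - 1) * b + c)
      = ((1 - p ^ k) / (1 - p)) * a + ((1 - p ^ k) / (1 - p) - 1) * b + c := by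
  have h1 : (1 : ℝ) - p ≠ 0 := sub_ne_zero.mpr (Ne.symm hp)
  induction k with
  | zero => omega
  | succ n ih =>
    rcases Nat.eq_or_lt_of_le hk with h | h
    · simp [← h]
      field_simp
      ring
    · have hn : 1 ≤ n := by omega
      have := ih hn
      rw [Finset.sum_Ico_succ_top hn]
      have hkn : n + 1 - 1 = n := rfl
      rw [hkn]
      have hpow : p ^ n = p ^ (n - 1) * p := by
        rw [← pow_succ]; congr 1; omega
      push_cast
      rw [hpow]
      have key : (∑ j ∈ Finset.Ico 1 n,
          (p ^ (j - 1) * (1 - p)) * ((j : ℝ) * a + ((j : ℝ) - 1) * b + c))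
          = ((1 - p ^ n) / (1 - p)) * a + ((1 - p ^ n) / (1 - p) - 1) * b + c
            - p ^ (n - 1) * ((n : ℝ) * a + ((n : ℝ) - 1) * b + c) := by
        linarith [this]
      rw [key, hpow]
      field_simp
      rw [pow_succ p n, hpow]
      ring
end

section
/- Let p ∈ (0,1), k ≥ 1 a natural number, and a, b, c real numbers. Set w_j = p^(j−1)·(1 − p) for 1 ≤ j < k, w_k = p^(k−1), μ_k = (1 − p^k)/(1 − p), c_j = j·a + (j − 1)·b + c, and λ_k = a + ((μ_k − 1)/μ_k)·b + (1/μ_k)·c. If L : ℕ → ℝ satisfies L(N) = ∑_{j=1}^{k} w_j·(c_j + L(N − j)) for all N ≥ k, then for every N ∈ ℕ, |L(N) − λ_k·N| ≤ max_{0 ≤ m < k} |L(m) − λ_k·m|; that is, L(N) = N·(a + ((μ_k − 1)/μ_k)·b + (1/μ_k)·c) + O(1). -/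

lemma sum_update_point {s : Finset ℕ} {x : ℕ} (hx : x ∈ s) (f g : ℕ → ℝ)
    (h : ∀ j ∈ s, j ≠ x → f j = g j) :
    ∑ j ∈ s, f j = ∑ j ∈ s, g j - g x + f x := by
  rw [← Finset.sum_erase_add s f hx, ← Finset.sum_erase_add s g hx]
  have heq : ∑ j ∈ s.erase x, f j = ∑ j ∈ s.erase x, g j :=
    Finset.sum_congr rfl (fun j hj => h j (Finset.mem_of_mem_erase hj) (Finset.ne_of_mem_erase hj))
  rw [heq]; ring

lemma aux_sum_one (p : ℝ) : ∀ k : ℕ, 1 ≤ k →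
    ∑ j ∈ Finset.Icc 1 k, (if j = k then p ^ (j-1) else p ^ (j-1) * (1-p)) = 1 := by
  intro k hk
  induction k, hk using Nat.le_induction with
  | base => simp
  | succ k hk ih =>
    rw [Finset.sum_Icc_succ_top (by omega : 1 ≤ k+1)]
    have hmem : k ∈ Finset.Icc 1 k := Finset.mem_Icc.mpr ⟨hk, le_refl k⟩
    have h1 : ∑ j ∈ Finset.Icc 1 k, (if j = k+1 then p ^ (j-1) else p ^ (j-1) * (1-p))
        = ∑ j ∈ Finset.Icc 1 k, (if j = k then p ^ (j-1) else p ^ (j-1) * (1-p))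
          - p ^ (k-1) + p ^ (k-1) * (1-p) := by
      have := sum_update_point hmem
        (fun j => if j = k+1 then p ^ (j-1) else p ^ (j-1) * (1-p))
        (fun j => if j = k then p ^ (j-1) else p ^ (j-1) * (1-p))
        (by intro j hj hjk
            have hj' : j ≤ k := (Finset.mem_Icc.mp hj).2
            simp [hjk, Nat.ne_of_lt (by omega : j < k + 1)])
      simpa using this
    rw [h1, ih]
    obtain ⟨m, rfl⟩ : ∃ m, k = m + 1 := ⟨k - 1, by omega⟩
    simp [pow_succ]
    ring

lemma aux_sum_mu (p : ℝ) : ∀ k : ℕ, 1 ≤ k →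
    ∑ j ∈ Finset.Icc 1 k, (if j = k then p ^ (j-1) else p ^ (j-1) * (1-p)) * (j : ℝ)
      = ∑ i ∈ Finset.range k, p ^ i := by
  intro k hk
  induction k, hk using Nat.le_induction with
  | base => simp
  | succ k hk ih =>
    rw [Finset.sum_Icc_succ_top (by omega : 1 ≤ k+1)]
    have hmem : k ∈ Finset.Icc 1 k := Finset.mem_Icc.mpr ⟨hk, le_refl k⟩
    have h1 : ∑ j ∈ Finset.Icc 1 k, (if j = k+1 then p ^ (j-1) else p ^ (j-1) * (1-p)) * (j:ℝ)
        = ∑ j ∈ Finset.Icc 1 k, (if j = k then p ^ (j-1) else p ^ (j-1) * (1-p)) * (j:ℝ)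
          - p ^ (k-1) * k + p ^ (k-1) * (1-p) * k := by
      have := sum_update_point hmem
        (fun j => (if j = k+1 then p ^ (j-1) else p ^ (j-1) * (1-p)) * (j:ℝ))
        (fun j => (if j = k then p ^ (j-1) else p ^ (j-1) * (1-p)) * (j:ℝ))
        (by intro j hj hjk
            have hj' : j ≤ k := (Finset.mem_Icc.mp hj).2
            simp [hjk, Nat.ne_of_lt (by omega : j < k + 1)])
      simpa using this
    rw [h1, ih, Finset.sum_range_succ]
    obtain ⟨m, rfl⟩ : ∃ m, k = m + 1 := ⟨k - 1, by omega⟩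
    simp [pow_succ]
    ring

/-- **Expected runtime with a bounded speculative window.**
With per-hop success probability `p ∈ (0,1)`, window size `k ≥ 1`, weights
`w_j = p^(j−1)(1−p)` for `1 ≤ j < k` and `w_k = p^(k−1)`, per-round costs
`C_j = j·a + (j−1)·b + c`, `μ_k = (1 − p^k)/(1 − p)`, and per-hop rate
`λ_k = a + ((μ_k − 1)/μ_k)·b + (1/μ_k)·c`, any `L : ℕ → ℝ` satisfying the renewal
recurrence `L(N) = ∑_{j=1}^k w_j (C_j + L(N − j))` for `N ≥ k` stays within a constant
(the maximal initial deviation) of `λ_k·N`; that is, `L(N) = λ_k·N + O(1)`. -/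
theorem bounded_window_expected_runtime
    (p : ℝ) (hp : p ∈ Set.Ioo (0 : ℝ) 1) (k : ℕ) (hk : 1 ≤ k)
    (a b c : ℝ) (w C : ℕ → ℝ) (μk lamk : ℝ) (L : ℕ → ℝ)
    (hw_lt : ∀ j, 1 ≤ j → j < k → w j = p ^ (j - 1) * (1 - p))
    (hw_k : w k = p ^ (k - 1))
    (hC : ∀ j, C j = (j : ℝ) * a + ((j : ℝ) - 1) * b + c)
    (hμk : μk = (1 - p ^ k) / (1 - p))
    (hlamk : lamk = a + ((μk - 1) / μk) * b + (1 / μk) * c)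
    (hrec : ∀ N : ℕ, k ≤ N → L N = ∑ j ∈ Finset.Icc 1 k, w j * (C j + L (N - j))) :
    ∀ N : ℕ, |L N - lamk * N| ≤
      (Finset.range k).sup' (Finset.nonempty_range_iff.mpr (by omega))
        (fun m => |L m - lamk * m|) := by
  obtain ⟨hp0, hp1⟩ := hp
  have hp1' : (1:ℝ) - p > 0 := by linarith
  -- w agrees with the explicit formula on Icc 1 k
  have hw' : ∀ j ∈ Finset.Icc 1 k, w j = if j = k then p ^ (j-1) else p ^ (j-1) * (1-p) := by
    intro j hj
    obtain ⟨hj1, hj2⟩ := Finset.mem_Icc.mp hj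
    rcases eq_or_lt_of_le hj2 with h | h
    · simp [h, hw_k]
    · simp [Nat.ne_of_lt h, hw_lt j hj1 h]
  have hS1 : ∑ j ∈ Finset.Icc 1 k, w j = 1 := by
    rw [Finset.sum_congr rfl hw']; exact aux_sum_one p k hk
  have hμ_geom : μk = ∑ i ∈ Finset.range k, p ^ i := by
    rw [hμk, geom_sum_eq (by linarith : p ≠ 1),
      div_eq_div_iff (by linarith : (1:ℝ) - p ≠ 0) (by
        intro h; apply hp1.ne; linarith [sub_eq_zero.mp h] : p - 1 ≠ 0)]
    ring
  have hS2 : ∑ j ∈ Finset.Icc 1 k, w j * (j : ℝ) = μk := by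
    rw [Finset.sum_congr rfl (fun j hj => by rw [hw' j hj]), aux_sum_mu p k hk, hμ_geom]
  have hμ_pos : 0 < μk := by
    rw [hμ_geom]
    exact Finset.sum_pos (fun i _ => pow_pos hp0 i) (Finset.nonempty_range_iff.mpr (by omega))
  have hμ_ne : μk ≠ 0 := ne_of_gt hμ_pos
  -- cost identity
  have hWC : ∑ j ∈ Finset.Icc 1 k, w j * C j = lamk * μk := by
    have step1 : ∑ j ∈ Finset.Icc 1 k, w j * C j
        = ∑ j ∈ Finset.Icc 1 k, (w j * (j:ℝ) * a + (w j * (j:ℝ) - w j) * b + w j * c) :=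
      Finset.sum_congr rfl (fun j _ => by rw [hC j]; ring)
    have step2 : ∑ j ∈ Finset.Icc 1 k, (w j * (j:ℝ) * a + (w j * (j:ℝ) - w j) * b + w j * c)
        = (∑ j ∈ Finset.Icc 1 k, w j * (j:ℝ)) * a
          + ((∑ j ∈ Finset.Icc 1 k, w j * (j:ℝ)) - ∑ j ∈ Finset.Icc 1 k, w j) * b
          + (∑ j ∈ Finset.Icc 1 k, w j) * c := by
      rw [Finset.sum_add_distrib, Finset.sum_add_distrib, ← Finset.sum_mul, ← Finset.sum_mul,
        ← Finset.sum_mul, Finset.sum_sub_distrib]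
    rw [step1, step2, hS1, hS2, hlamk]
    field_simp
  -- nonnegativity of weights
  have hw_nonneg : ∀ j ∈ Finset.Icc 1 k, 0 ≤ w j := by
    intro j hj
    rw [hw' j hj]
    split
    · positivity
    · have : (0:ℝ) ≤ 1 - p := by linarith
      positivity
  set M := (Finset.range k).sup' (Finset.nonempty_range_iff.mpr (by omega))
      (fun m => |L m - lamk * m|) with hM
  intro N
  induction N using Nat.strong_induction_on with
  | _ N ih =>
    by_cases hN : N < k
    · exact Finset.le_sup' (fun m => |L m - lamk * m|) (Finset.mem_range.mpr hN)
    · push_neg at hN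
      have hD : L N - lamk * N
          = ∑ j ∈ Finset.Icc 1 k, w j * (L (N - j) - lamk * ((N - j : ℕ) : ℝ)) := by
        rw [hrec N hN]
        have hsplit : ∀ j ∈ Finset.Icc 1 k,
            w j * (C j + L (N - j))
              = w j * (L (N - j) - lamk * ((N - j : ℕ) : ℝ))
                + (w j * C j - lamk * (w j * (j:ℝ)) + lamk * (N:ℝ) * w j) := by
          intro j hj
          obtain ⟨hj1, hj2⟩ := Finset.mem_Icc.mp hj
          have hjN : j ≤ N := le_trans hj2 hN
          rw [Nat.cast_sub hjN]
          ring
        rw [Finset.sum_congr rfl hsplit, Finset.sum_add_distrib]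
        have : ∑ j ∈ Finset.Icc 1 k,
            (w j * C j - lamk * (w j * (j:ℝ)) + lamk * (N:ℝ) * w j) = lamk * N := by
          rw [Finset.sum_add_distrib, Finset.sum_sub_distrib, hWC, ← Finset.mul_sum, hS2,
            ← Finset.mul_sum, hS1]
          ring
        rw [this]
        ring
      rw [hD]
      calc |∑ j ∈ Finset.Icc 1 k, w j * (L (N - j) - lamk * ((N - j : ℕ) : ℝ))|
          ≤ ∑ j ∈ Finset.Icc 1 k, |w j * (L (N - j) - lamk * ((N - j : ℕ) : ℝ))| :=
            Finset.abs_sum_le_sum_abs _ _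
        _ ≤ ∑ j ∈ Finset.Icc 1 k, w j * M := by
            apply Finset.sum_le_sum
            intro j hj
            obtain ⟨hj1, hj2⟩ := Finset.mem_Icc.mp hj
            rw [abs_mul, abs_of_nonneg (hw_nonneg j hj)]
            exact mul_le_mul_of_nonneg_left (ih (N - j) (by omega)) (hw_nonneg j hj)
        _ = M := by rw [← Finset.sum_mul, hS1, one_mul]
end

section
/- Let p ∈ (0,1) and let α, β be real numbers with α ≤ 1 and 1 + β > 0. Then the relative latency RelLat_k = (β + α + (1 − α)·(1 − p)/(1 − p^k))/(1 + β) is nonincreasing in the window size: for every natural number k ≥ 1, RelLat_{k+1} ≤ RelLat_k. -/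
/-! Only the term `(1 - α)(1 - p) / (1 - p^k)` depends on `k`. Its numerator is nonnegative and
its denominator `1 - p^k` is positive for `k ≥ 1` and grows with `k`, since `p^k` decreases. -/

theorem div_one_sub_pow_le_of_le {p c : ℝ} (hp0 : 0 ≤ p) (hp1 : p < 1) (hc : 0 ≤ c)
    {m n : ℕ} (hm : m ≠ 0) (hmn : m ≤ n) :
    c / (1 - p ^ n) ≤ c / (1 - p ^ m) := by
  have hpos : 0 < 1 - p ^ m := sub_pos.2 (pow_lt_one₀ hp0 hp1 hm)
  have hpow : p ^ n ≤ p ^ m := pow_le_pow_of_le_one hp0 hp1.le hmn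
  exact div_le_div_of_nonneg_left hc hpos (by linarith)

/-- **Relative latency is nonincreasing in the window size.**
For `p ∈ (0,1)`, `α ≤ 1`, `1 + β > 0`, the bounded-window relative latency
`RelLat_k = (β + α + (1−α)(1−p)/(1−p^k))/(1+β)` satisfies
`RelLat_{k+1} ≤ RelLat_k` for every `k ≥ 1`. -/
theorem relative_latency_antitone
    (p α β : ℝ) (hp : p ∈ Set.Ioo (0 : ℝ) 1) (hα : α ≤ 1) (hβ : 0 < 1 + β) :
    ∀ k : ℕ, 1 ≤ k →
      (β + α + (1 - α) * (1 - p) / (1 - p ^ (k + 1))) / (1 + β)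
        ≤ (β + α + (1 - α) * (1 - p) / (1 - p ^ k)) / (1 + β) := by
  intro k hk
  obtain ⟨hp0, hp1⟩ := hp
  have hnum : 0 ≤ (1 - α) * (1 - p) := mul_nonneg (sub_nonneg.2 hα) (sub_nonneg.2 hp1.le)
  have hterm := div_one_sub_pow_le_of_le hp0.le hp1 hnum (by omega : k ≠ 0) k.le_succ
  gcongr
end

section
/- Let α > 0, β > 0, ν > 0, and t > 0 be real numbers, and let k be a natural number with k·(α + β) ≥ 1 + β. Suppose D is distributed as gaussianReal(μ_D, σ_D²) where μ_D = t·(k·(α + β) − (1 + β)) and 0 < σ_D ≤ ν·t·√(k·α² + (k − 1)·β² + 1). Then the starvation probability satisfies P(D < 0) ≤ Φ(((1 + β) − k·(α + β))/(ν·√(k·α² + (k − 1)·β² + 1))), where Φ(x) = gaussianReal(0, 1)((−∞, x]) is the standard normal cumulative distribution function. -/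
open MeasureTheory ProbabilityTheory

lemma gauss_cdf_std (μ σ : ℝ) (hσ : 0 < σ) (x : ℝ) :
    gaussianReal μ (⟨σ ^ 2, sq_nonneg σ⟩ : NNReal) (Set.Iic x)
      = gaussianReal 0 1 (Set.Iic ((x - μ) / σ)) := by
  have h1 : (gaussianReal 0 1).map (σ * ·) = gaussianReal 0 (⟨σ^2, sq_nonneg σ⟩ * 1) :=
    by have := gaussianReal_map_const_mul (μ := 0) (v := 1) σ; rwa [mul_zero] at this
  have h2 : ((gaussianReal 0 1).map (σ * ·)).map (· + μ)
      = gaussianReal μ (⟨σ^2, sq_nonneg σ⟩ : NNReal) := by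
    rw [h1, gaussianReal_map_add_const]
    simp
    exact congrArg (gaussianReal μ) (mul_one (M := NNReal) _)
  rw [← h2, Measure.map_apply (by fun_prop) measurableSet_Iic,
    Measure.map_apply (by fun_prop) (by exact (measurableSet_Iic).preimage (by fun_prop))]
  congr 1
  ext y
  simp only [Set.mem_preimage, Set.mem_Iic]
  rw [le_div_iff₀ hσ]
  constructor <;> intro h <;> nlinarith

/-- **Starvation probability bound (Theorem: probability that SpecHop with `k` active
threads starves).** Under the CLT approximation, if the latency buffer `D` is Gaussian
with mean `μ_D = t(k(α + β) − (1 + β))` and standard deviation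
`σ_D ≤ ν·t·√(kα² + (k−1)β² + 1)`, and `k(α + β) ≥ 1 + β`, then
`P(D < 0) ≤ Φ(((1 + β) − k(α + β)) / (ν·√(kα² + (k−1)β² + 1)))`,
where `Φ` is the standard normal CDF. -/
theorem spechop_starvation_probability_bound
    {Ω : Type*} [MeasureSpace Ω] [IsProbabilityMeasure (ℙ : Measure Ω)]
    (α β ν t : ℝ) (hα : 0 < α) (hβ : 0 < β) (hν : 0 < ν) (ht : 0 < t)
    (k : ℕ) (hk : 1 + β ≤ (k : ℝ) * (α + β))
    (D : Ω → ℝ) (μD σD : ℝ)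
    (hμD : μD = t * ((k : ℝ) * (α + β) - (1 + β)))
    (hσD : 0 < σD)
    (hσD_le : σD ≤ ν * t * Real.sqrt ((k : ℝ) * α ^ 2 + ((k : ℝ) - 1) * β ^ 2 + 1))
    (hD : Measure.map D ℙ = gaussianReal μD (⟨σD ^ 2, sq_nonneg σD⟩ : NNReal)) :
    ℙ {ω | D ω < 0}
      ≤ gaussianReal 0 1
          (Set.Iic (((1 + β) - (k : ℝ) * (α + β))
            / (ν * Real.sqrt ((k : ℝ) * α ^ 2 + ((k : ℝ) - 1) * β ^ 2 + 1)))) := by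
  -- k ≥ 1
  have hk1 : (1 : ℝ) ≤ (k : ℝ) := by
    by_contra h
    push_neg at h
    have hk0 : k = 0 := Nat.lt_one_iff.mp (by exact_mod_cast h)
    rw [hk0] at hk
    push_cast at hk
    nlinarith
  set S : ℝ := (k : ℝ) * α ^ 2 + ((k : ℝ) - 1) * β ^ 2 + 1 with hS
  have hSpos : 0 < S := by nlinarith [sq_nonneg α, sq_nonneg β]
  have hsqrt : 0 < Real.sqrt S := Real.sqrt_pos.mpr hSpos
  -- D is a.e.-measurable
  have hDm : AEMeasurable D ℙ := by
    by_contra h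
    have h0 : Measure.map D ℙ = 0 := Measure.map_of_not_aemeasurable h
    rw [hD] at h0
    have : (gaussianReal μD (⟨σD ^ 2, sq_nonneg σD⟩ : NNReal)) Set.univ = 1 :=
      @measure_univ _ _ _ (instIsProbabilityMeasureGaussianReal _ _)
    simp [h0] at this
  -- P(D < 0) as gaussian measure of Iio 0
  have hset : {ω | D ω < 0} = D ⁻¹' (Set.Iio 0) := rfl
  have hmap : ℙ {ω | D ω < 0}
      = gaussianReal μD (⟨σD ^ 2, sq_nonneg σD⟩ : NNReal) (Set.Iio 0) := by
    rw [hset, ← Measure.map_apply_of_aemeasurable hDm measurableSet_Iio, hD]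
  have hvne : (⟨σD ^ 2, sq_nonneg σD⟩ : NNReal) ≠ 0 := by
    intro h
    have : σD ^ 2 = 0 := congrArg Subtype.val h
    nlinarith
  have hIioIic : gaussianReal μD (⟨σD ^ 2, sq_nonneg σD⟩ : NNReal) (Set.Iio 0)
      ≤ gaussianReal μD (⟨σD ^ 2, sq_nonneg σD⟩ : NNReal) (Set.Iic 0) :=
    measure_mono Set.Iio_subset_Iic_self
  rw [hmap]
  refine hIioIic.trans ?_
  rw [gauss_cdf_std μD σD hσD 0]
  refine measure_mono (Set.Iic_subset_Iic.mpr ?_)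
  -- arithmetic: (0 - μD)/σD ≤ ((1+β) - k(α+β)) / (ν√S)
  have hc : (1 + β) - (k : ℝ) * (α + β) ≤ 0 := by linarith
  rw [div_le_div_iff₀ hσD (by positivity)]
  have hnum : 0 - μD = t * ((1 + β) - (k : ℝ) * (α + β)) := by rw [hμD]; ring
  rw [hnum]
  nlinarith [mul_nonneg (neg_nonneg.mpr hc) (sub_nonneg.mpr hσD_le)]
end
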